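/- Let S be a Cu-semigroup in which, for every x' ≪ x, there exist y', y ∈ S with x' ≪ y' ≪ y ≪ x and y ≤ ∞·y'. Then for every x' ≪ x there exists a sequence y'_k ≪ y_k (k ∈ ℕ) with x' ≪ y'_0, y_k ≪ y'_{k+1}, y_k ≪ x, and y_k ≤ ∞·y'_k for all k; in particular, z := sup_k y_k satisfies x' ≪ z ≤ x and z = sup_k y'_k. -/

import Mathlib

/-- A Cu-semigroup: a positively ordered abelian monoid in which every
increasing sequence has a supremum and addition preserves such suprema. -/
class CuSemigroup (S : Type*) extends AddCommMonoid S, PartialOrder S where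
  add_le_add' : ∀ {a b c d : S}, a ≤ b → c ≤ d → a + c ≤ b + d
  zero_le' : ∀ a : S, 0 ≤ a
  /-- supremum of an increasing sequence -/
  seqSup : (ℕ → S) → S
  le_seqSup : ∀ (f : ℕ → S), Monotone f → ∀ n, f n ≤ seqSup f
  seqSup_le : ∀ (f : ℕ → S), Monotone f → ∀ b : S, (∀ n, f n ≤ b) → seqSup f ≤ b
  add_seqSup : ∀ (f : ℕ → S) (a : S), Monotone f →
    seqSup (fun n => a + f n) = a + seqSup f

variable {S : Type*} [CuSemigroup S]

/-- The way-below relation in a Cu-semigroup. -/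
def wayBelow (x y : S) : Prop :=
  ∀ f : ℕ → S, Monotone f → y ≤ CuSemigroup.seqSup f → ∃ n, x ≤ f n

infix:50 " ≪ " => wayBelow

/-- ∞·x := sup_n (n·x). -/
def infty (x : S) : S := CuSemigroup.seqSup (fun n => n • x)

/-
Starting from x' ≪ a' ≪ a ≪ x, apply the hypothesis again to a ≪ x, and so on: dependent choice
produces a chain y'_0 ≪ y_0 ≪ y'_1 ≪ y_1 ≪ ⋯ below x. Since the two sequences interleave, they
are increasing with the same supremum z, and x' ≪ y'_0 ≤ z ≤ x.
-/

theorem exists_seq_chain_of_forall_exists {α : Type*} {P : α → Prop} {R : α → α → Prop} {a : α}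
    (ha : P a) (h : ∀ p, P p → ∃ q, P q ∧ R p q) :
    ∃ f : ℕ → α, f 0 = a ∧ ∀ n, P (f n) ∧ R (f n) (f (n + 1)) := by
  choose g hgP hgR using h
  let next : {p // P p} → {p // P p} := fun p => ⟨g p p.2, hgP p p.2⟩
  refine ⟨fun n => (next^[n] ⟨a, ha⟩).1, rfl, fun n => ⟨(next^[n] ⟨a, ha⟩).2, ?_⟩⟩
  simp only [Function.iterate_succ_apply']
  exact hgR _ _

section Interleave

variable {α : Type*} [Preorder α] {f g : ℕ → α}

theorem monotone_of_interleave_left (h₁ : ∀ k, f k ≤ g k) (h₂ : ∀ k, g k ≤ f (k + 1)) :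
    Monotone f :=
  monotone_nat_of_le_succ fun k => (h₁ k).trans (h₂ k)

theorem monotone_of_interleave_right (h₁ : ∀ k, f k ≤ g k) (h₂ : ∀ k, g k ≤ f (k + 1)) :
    Monotone g :=
  monotone_nat_of_le_succ fun k => (h₂ k).trans (h₁ (k + 1))

end Interleave

theorem wayBelow.le {a b : S} (h : a ≪ b) : a ≤ b := by
  obtain ⟨_, hn⟩ := h (fun _ => b) monotone_const (CuSemigroup.le_seqSup _ monotone_const 0)
  exact hn

theorem wayBelow.trans_le {a b c : S} (hab : a ≪ b) (hbc : b ≤ c) : a ≪ c :=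
  fun f hf hc => hab f hf (hbc.trans hc)

namespace CuSemigroup

theorem seqSup_eq_of_interleave {f g : ℕ → S} (h₁ : ∀ k, f k ≤ g k)
    (h₂ : ∀ k, g k ≤ f (k + 1)) : seqSup f = seqSup g := by
  have hf := monotone_of_interleave_left h₁ h₂
  have hg := monotone_of_interleave_right h₁ h₂
  exact le_antisymm
    (seqSup_le f hf _ fun k => (h₁ k).trans (le_seqSup g hg k))
    (seqSup_le g hg _ fun k => (h₂ k).trans (le_seqSup f hf (k + 1)))

end CuSemigroup

theorem stmt10_general
    (hdense : ∀ x' x : S, x' ≪ x →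
      ∃ y' y : S, x' ≪ y' ∧ y' ≪ y ∧ y ≪ x ∧ y ≤ infty y')
    (x' x : S) (h : x' ≪ x) :
    ∃ y' y : ℕ → S,
      (x' ≪ y' 0) ∧
      (∀ k, y' k ≪ y k) ∧
      (∀ k, y k ≪ y' (k + 1)) ∧
      (∀ k, y k ≪ x) ∧
      (∀ k, y k ≤ infty (y' k)) ∧
      (x' ≪ CuSemigroup.seqSup y) ∧
      CuSemigroup.seqSup y ≤ x ∧
      CuSemigroup.seqSup y = CuSemigroup.seqSup y' := by
  obtain ⟨a', a, hx'a', ha'a, hax, ha_le⟩ := hdense x' x h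
  obtain ⟨p, hp0, hp⟩ := exists_seq_chain_of_forall_exists
    (P := fun p : S × S => p.1 ≪ p.2 ∧ p.2 ≪ x ∧ p.2 ≤ infty p.1)
    (R := fun p q => p.2 ≪ q.1) (a := (a', a)) ⟨ha'a, hax, ha_le⟩
    fun p hp =>
      let ⟨y', y, hpy', hy'y, hyx, hy_le⟩ := hdense p.2 x hp.2.1
      ⟨(y', y), ⟨hy'y, hyx, hy_le⟩, hpy'⟩
  have h₁ : ∀ k, (p k).1 ≤ (p k).2 := fun k => (hp k).1.1.le
  have h₂ : ∀ k, (p k).2 ≤ (p (k + 1)).1 := fun k => (hp k).2.le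
  have hmono := monotone_of_interleave_right h₁ h₂
  have hx'p : x' ≪ (p 0).1 := by rwa [hp0]
  refine ⟨fun k => (p k).1, fun k => (p k).2, hx'p, fun k => (hp k).1.1, fun k => (hp k).2,
    fun k => (hp k).1.2.1, fun k => (hp k).1.2.2, ?_, ?_, ?_⟩
  · exact hx'p.trans_le ((h₁ 0).trans (CuSemigroup.le_seqSup _ hmono 0))
  · exact CuSemigroup.seqSup_le _ hmono x fun k => (hp k).1.2.1.le
  · exact (CuSemigroup.seqSup_eq_of_interleave h₁ h₂).symm

theorem stmt10
    (hinterp : ∀ x' x : S, x' ≪ x → ∃ z : S, x' ≪ z ∧ z ≪ x)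
    (hdense : ∀ x' x : S, x' ≪ x →
      ∃ y' y : S, x' ≪ y' ∧ y' ≪ y ∧ y ≪ x ∧ y ≤ infty y')
    (x' x : S) (h : x' ≪ x) :
    ∃ y' y : ℕ → S,
      (x' ≪ y' 0) ∧
      (∀ k, y' k ≪ y k) ∧
      (∀ k, y k ≪ y' (k + 1)) ∧
      (∀ k, y k ≪ x) ∧
      (∀ k, y k ≤ infty (y' k)) ∧
      (x' ≪ CuSemigroup.seqSup y) ∧
      CuSemigroup.seqSup y ≤ x ∧
      CuSemigroup.seqSup y = CuSemigroup.seqSup y' :=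
  stmt10_general hdense x' x h
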